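/- arXiv:2411.03161 — 4 statements merged into one kernel-verified Lean document; each statement's English description precedes it below -/
import Mathlib

section
/- Let n ≥ 1, s ≥ 1, and let h ∈ ℂ[Y_1,…,Y_n] be a homogeneous harmonic polynomial of degree k with k ≤ s. Then the differential operator h(∂/∂X_1,…,∂/∂X_n) applied to q_n^s gives h∘q_n^s = (2^k · s!/(s−k)!) · q_n^{s−k} · h(X_1,…,X_n), where on the right-hand side h is rewritten in the X variables. -/
open MvPolynomial

noncomputable def qpoly (n : ℕ) : MvPolynomial (Fin n) ℂ :=
  ∑ i : Fin n, X i ^ 2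

noncomputable def linForm {n : ℕ} (a : Fin n → ℂ) : MvPolynomial (Fin n) ℂ :=
  ∑ i : Fin n, C (a i) * X i

noncomputable def dotC {n : ℕ} (a b : Fin n → ℂ) : ℂ :=
  ∑ i : Fin n, a i * b i

noncomputable def diffOp {n : ℕ} (φ f : MvPolynomial (Fin n) ℂ) : MvPolynomial (Fin n) ℂ :=
  ∑ d ∈ φ.support, φ.coeff d •
    ((List.ofFn fun i : Fin n =>
        ((pderiv i).toLinearMap : MvPolynomial (Fin n) ℂ →ₗ[ℂ] MvPolynomial (Fin n) ℂ) ^ d i).prod f)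

noncomputable def lap {n : ℕ} (f : MvPolynomial (Fin n) ℂ) : MvPolynomial (Fin n) ℂ :=
  ∑ i : Fin n, pderiv i (pderiv i f)

/-!
Induction on `k`. For `h` of degree `k + 1`, Euler's identity `∑ i, X i * ∂ᵢ h = (k + 1) • h`
turns `(k + 1) • h(∂) q^s` into `∑ i, ∂ᵢ ((∂ᵢ h)(∂) q^s)`, and each `∂ᵢ h` is harmonic and
homogeneous of degree `k`. After the induction hypothesis, with `m = s - k`, what remains is
`∑ i, ∂ᵢ (q^m * ∂ᵢ h) = 2m q^(m-1) ∑ i, X i * ∂ᵢ h + q^m Δh = 2mk q^(m-1) h`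
by Euler's identity once more and `Δh = 0`.
-/

namespace MvPolynomial

theorem pderiv_pderiv_comm {R σ : Type*} [CommRing R] (i j : σ) (f : MvPolynomial σ R) :
    pderiv i (pderiv j f) = pderiv j (pderiv i f) := by
  -- the commutator of two derivations is a derivation, and this one kills every variable
  have hbracket :
      ⁅pderiv i, pderiv j⁆ = (0 : Derivation R (MvPolynomial σ R) (MvPolynomial σ R)) :=
    derivation_ext fun k => by
      classical
      rw [Derivation.commutator_apply, pderiv_X, pderiv_X]
      simp [Pi.single_apply, apply_ite]
  have := congr($hbracket f)
  rw [Derivation.commutator_apply] at this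
  exact sub_eq_zero.mp this

section PderivAlgHom

variable {R σ : Type*} [CommRing R]

open scoped IsMulCommutative

noncomputable abbrev pderivOperators (R σ : Type*) [CommRing R] :
    Subalgebra R (Module.End R (MvPolynomial σ R)) :=
  Algebra.adjoin R (Set.range fun i : σ => (pderiv i).toLinearMap)

instance : IsMulCommutative (pderivOperators R σ) :=
  Algebra.isMulCommutative_adjoin R <| by
    rintro _ ⟨i, rfl⟩ _ ⟨j, rfl⟩
    exact LinearMap.ext fun f => pderiv_pderiv_comm i j f

/-- `φ ↦ φ(∂/∂X₁, …)`: since the partial derivatives commute, `aeval` can substitute them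
into the commutative subalgebra they generate. -/
noncomputable def pderivAlgHom : MvPolynomial σ R →ₐ[R] Module.End R (MvPolynomial σ R) :=
  (pderivOperators R σ).val.comp
    (aeval fun i => ⟨(pderiv i).toLinearMap, Algebra.subset_adjoin ⟨i, rfl⟩⟩)

theorem pderivAlgHom_X (i : σ) :
    pderivAlgHom (X i : MvPolynomial σ R) = (pderiv i).toLinearMap := by
  simp [pderivAlgHom]

theorem pderivAlgHom_monomial {n : ℕ} (d : Fin n →₀ ℕ) (c : R) :
    pderivAlgHom (monomial d c) =
      c • (List.ofFn fun i : Fin n => ((pderiv i).toLinearMap : Module.End R _) ^ d i).prod := by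
  rw [pderivAlgHom, AlgHom.comp_apply, aeval_monomial,
    Finsupp.prod_fintype _ _ (fun _ => pow_zero _), ← List.prod_ofFn, map_mul, AlgHom.commutes,
    map_list_prod, List.map_ofFn, Algebra.smul_def]
  rfl

theorem pderivAlgHom_C_apply (c : R) (f : MvPolynomial σ R) : pderivAlgHom (C c) f = c • f := by
  rw [← algebraMap_eq, AlgHom.commutes, Module.algebraMap_end_apply]

theorem pderivAlgHom_X_mul_apply (i : σ) (φ f : MvPolynomial σ R) :
    pderivAlgHom (X i * φ) f = pderiv i (pderivAlgHom φ f) := by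
  rw [map_mul, pderivAlgHom_X, Module.End.mul_apply, Derivation.coeFn_coe]

theorem IsHomogeneous.nsmul_pderivAlgHom_apply [Fintype σ] {φ : MvPolynomial σ R} {k : ℕ}
    (hφ : φ.IsHomogeneous k) (f : MvPolynomial σ R) :
    k • pderivAlgHom φ f = ∑ i, pderiv i (pderivAlgHom (pderiv i φ) f) := by
  simp_rw [← pderivAlgHom_X_mul_apply, ← LinearMap.sum_apply, ← map_sum, hφ.sum_X_mul_pderiv,
    map_nsmul, LinearMap.smul_apply]

end PderivAlgHom

end MvPolynomial

theorem lap_pderiv {n : ℕ} (j : Fin n) (h : MvPolynomial (Fin n) ℂ) :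
    lap (pderiv j h) = pderiv j (lap h) := by
  simp only [lap, map_sum, pderiv_pderiv_comm _ j]

theorem pderiv_qpoly {n : ℕ} (i : Fin n) : pderiv i (qpoly n) = 2 * X i := by
  classical
  simp [qpoly, pderiv_X, Pi.single_apply, mul_comm]

theorem sum_pderiv_qpoly_pow_mul_pderiv {n k : ℕ} (m : ℕ) {h : MvPolynomial (Fin n) ℂ}
    (hhom : h.IsHomogeneous k) (hharm : lap h = 0) :
    ∑ i, pderiv i (qpoly n ^ m * pderiv i h) = (2 * m * k : ℂ) • (qpoly n ^ (m - 1) * h) := by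
  have hterm (i : Fin n) : pderiv i (qpoly n ^ m * pderiv i h) =
      C (2 * m : ℂ) * qpoly n ^ (m - 1) * (X i * pderiv i h) +
        qpoly n ^ m * pderiv i (pderiv i h) := by
    rw [pderiv_mul, pderiv_pow, pderiv_qpoly, map_mul, map_ofNat, map_natCast]
    ring
  rw [Finset.sum_congr rfl fun i _ => hterm i, Finset.sum_add_distrib, ← Finset.mul_sum,
    ← Finset.mul_sum, hhom.sum_X_mul_pderiv, ← lap, hharm, mul_zero, add_zero, smul_eq_C_mul,
    nsmul_eq_mul]
  simp only [map_mul, map_natCast, map_ofNat]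
  ring

theorem pderivAlgHom_apply_qpoly_pow {n s k : ℕ} (hk : k ≤ s) {h : MvPolynomial (Fin n) ℂ}
    (hhom : h.IsHomogeneous k) (hharm : lap h = 0) :
    pderivAlgHom h (qpoly n ^ s) = (2 ^ k * s.descFactorial k : ℂ) • (qpoly n ^ (s - k) * h) := by
  induction k generalizing h with
  | zero =>
    rw [totalDegree_eq_zero_iff_eq_C.mp ((totalDegree_zero_iff_isHomogeneous (p := h)).mpr hhom),
      pderivAlgHom_C_apply, smul_eq_C_mul]
    simp [mul_comm]
  | succ k ih =>
    have hderiv (i : Fin n) : pderivAlgHom (pderiv i h) (qpoly n ^ s) =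
        (2 ^ k * s.descFactorial k : ℂ) • (qpoly n ^ (s - k) * pderiv i h) :=
      ih (by omega) hhom.pderiv (by rw [lap_pderiv, hharm, map_zero])
    have hsucc : ((k + 1 : ℕ) : ℂ) • pderivAlgHom h (qpoly n ^ s) =
        ((k + 1 : ℕ) : ℂ) • ((2 ^ (k + 1) * s.descFactorial (k + 1) : ℂ) •
          (qpoly n ^ (s - (k + 1)) * h)) := by
      rw [Nat.cast_smul_eq_nsmul, hhom.nsmul_pderivAlgHom_apply]
      simp_rw [hderiv, Derivation.map_smul, ← Finset.smul_sum,
        sum_pderiv_qpoly_pow_mul_pderiv _ hhom hharm, smul_smul, Nat.sub_sub,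
        Nat.descFactorial_succ]
      congr 1
      push_cast
      ring
    exact smul_right_injective _ (Nat.cast_ne_zero.mpr k.succ_ne_zero) hsucc

theorem diffOp_eq_pderivAlgHom {n : ℕ} (φ f : MvPolynomial (Fin n) ℂ) :
    diffOp φ f = pderivAlgHom φ f := by
  conv_rhs => rw [φ.as_sum]
  simp only [diffOp, map_sum, LinearMap.sum_apply, pderivAlgHom_monomial, LinearMap.smul_apply]

theorem diffOp_harmonic_power_of_quadric_general (n s k : ℕ) (hk : k ≤ s)
    (h : MvPolynomial (Fin n) ℂ) (hhom : h.IsHomogeneous k) (hharm : lap h = 0) :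
    diffOp h (qpoly n ^ s) =
      ((2 : ℂ) ^ k * (Nat.factorial s : ℂ) / (Nat.factorial (s - k) : ℂ)) •
        (qpoly n ^ (s - k) * h) := by
  rw [diffOp_eq_pderivAlgHom, pderivAlgHom_apply_qpoly_pow hk hhom hharm,
    ← Nat.factorial_mul_descFactorial hk, Nat.cast_mul,
    mul_div_assoc, mul_div_cancel_left₀ _ (Nat.cast_ne_zero.mpr (Nat.factorial_ne_zero _))]

/-- For a homogeneous harmonic polynomial h of degree k ≤ s,
h ∘ q_n^s = 2^k · s!/(s−k)! · q_n^{s−k} · h. -/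
theorem diffOp_harmonic_power_of_quadric (n s k : ℕ) (hn : 1 ≤ n) (hs : 1 ≤ s) (hk : k ≤ s)
    (h : MvPolynomial (Fin n) ℂ) (hhom : h.IsHomogeneous k) (hharm : lap h = 0) :
    diffOp h (qpoly n ^ s) =
      ((2 : ℂ) ^ k * (Nat.factorial s : ℂ) / (Nat.factorial (s - k) : ℂ)) •
        (qpoly n ^ (s - k) * h) :=
  diffOp_harmonic_power_of_quadric_general n s k hk h hhom hharm
end

section
/- Let n ≥ 1 and s ≥ 1, and for A ∈ GL_n(ℂ) let A·f denote the polynomial obtained from f ∈ ℂ[X_1,…,X_n] by substituting Σ_{k} A_{kj} X_k for X_j for each j. Then A·(q_n^s) = q_n^s if and only if A = ζB for some ζ ∈ ℂ with ζ^{2s} = 1 and some matrix B with B^T B = I (i.e., B ∈ O_n(ℂ)). -/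
open MvPolynomial

/-!
Evaluating at `x`, the substituted quadric `A · q_n` is the quadratic form `x ↦ xᵀ (A Aᵀ) x`, and
by polarization a symmetric matrix is determined by its quadratic form; hence `A · q_n = c q_n`
exactly when `A Aᵀ = c I`. If `(A · q_n)^s = q_n^s`, then in the fraction field of the
polynomial ring the quotient `(A · q_n) / q_n` is a root of `X^s - 1`, which splits over `ℂ`, so
`A · q_n = c q_n` with `c^s = 1`; writing `c = ζ²` gives `A = ζ (ζ⁻¹ A)` with `ζ⁻¹ A` orthogonal.
-/

open Matrix

theorem Matrix.eq_of_dotProduct_mulVec_self_eq {R m : Type*} [CommRing R] [Invertible (2 : R)]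
    [Fintype m] [DecidableEq m] {M N : Matrix m m R} (hM : M.IsSymm) (hN : N.IsSymm)
    (h : ∀ x, x ⬝ᵥ M *ᵥ x = x ⬝ᵥ N *ᵥ x) : M = N := by
  have polarize : ∀ P : Matrix m m R, P.IsSymm →
      QuadraticMap.associated P.toBilin'.toQuadraticMap = P.toBilin' := fun P hP =>
    QuadraticMap.associated_left_inverse R (isSymm_toBilin'_iff_isSymm.2 hP).eq
  apply toBilin'.injective
  rw [← polarize M hM, ← polarize N hN]
  congr 1
  ext x
  simpa [toBilin'_apply'] using h x

theorem exists_pow_eq_one_of_pow_eq_pow {k R : Type*} [Field k] [IsAlgClosed k] [CommRing R]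
    [IsDomain R] [Algebra k R] {s : ℕ} (hs : s ≠ 0) {u v : R} (hv : v ≠ 0) (h : u ^ s = v ^ s) :
    ∃ ζ : k, ζ ^ s = 1 ∧ u = algebraMap k R ζ * v := by
  let K := FractionRing R
  have hv' : algebraMap R K v ≠ 0 :=
    IsFractionRing.to_map_ne_zero_of_mem_nonZeroDivisors (mem_nonZeroDivisors_of_ne_zero hv)
  have hx : (algebraMap R K u / algebraMap R K v) ^ s = 1 := by
    rw [div_pow, ← map_pow, ← map_pow, h, div_self (by simpa using pow_ne_zero s hv')]
  have hroot : ((Polynomial.X ^ s - 1 : Polynomial k).map (algebraMap k K)).IsRoot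
      (algebraMap R K u / algebraMap R K v) := by
    simp [hx]
  obtain ⟨ζ, hζ⟩ := (IsAlgClosed.splits _).mem_range_of_isRoot
    (Polynomial.X_pow_sub_C_ne_zero (Nat.pos_of_ne_zero hs) 1) hroot
  refine ⟨ζ, (algebraMap k K).injective ?_, IsFractionRing.injective R K ?_⟩
  · rw [map_pow, hζ, hx, map_one]
  · rw [map_mul, ← IsScalarTower.algebraMap_apply, hζ, div_mul_cancel₀ _ hv']

noncomputable def linearSubst {σ R : Type*} [Fintype σ] [CommSemiring R] (A : Matrix σ σ R) :
    MvPolynomial σ R →ₐ[R] MvPolynomial σ R :=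
  bind₁ fun j => ∑ k, C (A k j) * X k

theorem eval_linearSubst {σ R : Type*} [Fintype σ] [CommSemiring R] (A : Matrix σ σ R)
    (x : σ → R) (f : MvPolynomial σ R) : eval x (linearSubst A f) = eval (x ᵥ* A) f := by
  simp only [linearSubst, eval, eval₂Hom_bind₁]
  congr 2 with j
  simp [vecMul, dotProduct, mul_comm]

theorem eval_qpoly {n : ℕ} (x : Fin n → ℂ) : eval x (qpoly n) = x ⬝ᵥ x := by
  simp [qpoly, dotProduct, sq]

theorem qpoly_ne_zero {n : ℕ} (hn : n ≠ 0) : qpoly n ≠ 0 := fun h => by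
  simpa [eval_qpoly, hn] using congrArg (eval 1) h

theorem eval_linearSubst_qpoly {n : ℕ} (A : Matrix (Fin n) (Fin n) ℂ) (x : Fin n → ℂ) :
    eval x (linearSubst A (qpoly n)) = x ⬝ᵥ (A * Aᵀ) *ᵥ x := by
  rw [eval_linearSubst, eval_qpoly, ← mulVec_mulVec, dotProduct_mulVec, mulVec_transpose]

theorem linearSubst_qpoly_eq_C_mul_iff {n : ℕ} (A : Matrix (Fin n) (Fin n) ℂ) (c : ℂ) :
    linearSubst A (qpoly n) = C c * qpoly n ↔ A * Aᵀ = c • 1 := by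
  have eval_C_mul_qpoly : ∀ x, eval x (C c * qpoly n) = x ⬝ᵥ (c • 1 : Matrix _ _ ℂ) *ᵥ x := by
    simp [eval_qpoly, smul_mulVec, dotProduct_smul]
  rw [MvPolynomial.funext_iff]
  simp only [eval_linearSubst_qpoly, eval_C_mul_qpoly]
  refine ⟨eq_of_dotProduct_mulVec_self_eq ?_ ?_, fun h x => by rw [h]⟩
  · simp [IsSymm, transpose_mul]
  · simp [IsSymm]

theorem Matrix.transpose_mul_self_eq_one_of_mul_transpose_eq_sq_smul {K m : Type*} [Field K]
    [Fintype m] [DecidableEq m] {A : Matrix m m K} {ξ : K} (hξ : ξ ≠ 0)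
    (h : A * Aᵀ = ξ ^ 2 • 1) : (ξ⁻¹ • A)ᵀ * (ξ⁻¹ • A) = 1 := by
  rw [mul_eq_one_comm, transpose_smul, smul_mul_smul_comm, h, smul_smul, ← sq, ← mul_pow,
    inv_mul_cancel₀ hξ, one_pow, one_smul]

theorem Matrix.smul_mul_transpose_smul_of_transpose_mul_self_eq_one {K m : Type*} [CommRing K]
    [Fintype m] [DecidableEq m] {B : Matrix m m K} (hB : Bᵀ * B = 1) (ζ : K) :
    (ζ • B) * (ζ • B)ᵀ = ζ ^ 2 • 1 := by
  rw [transpose_smul, smul_mul_smul_comm, mul_eq_one_comm.mp hB, sq]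

open Matrix in
theorem stabilizer_of_power_of_quadric_general (n s : ℕ) (hn : 1 ≤ n) (hs : 1 ≤ s)
    (A : Matrix (Fin n) (Fin n) ℂ) :
    (MvPolynomial.bind₁ (fun j : Fin n => ∑ k : Fin n, C (A k j) * X k)) (qpoly n ^ s)
        = qpoly n ^ s ↔
      ∃ (ζ : ℂ) (B : Matrix (Fin n) (Fin n) ℂ),
        ζ ^ (2 * s) = 1 ∧ Bᵀ * B = 1 ∧ A = ζ • B := by
  change linearSubst A (qpoly n ^ s) = _ ↔ _
  rw [map_pow]
  constructor
  · intro h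
    obtain ⟨c, hc, hAq⟩ :=
      exists_pow_eq_one_of_pow_eq_pow (k := ℂ) (by omega) (qpoly_ne_zero (by omega)) h
    rw [algebraMap_eq, linearSubst_qpoly_eq_C_mul_iff] at hAq
    obtain ⟨ξ, rfl⟩ := IsAlgClosed.exists_pow_nat_eq c two_pos
    have hξ : ξ ≠ 0 := by rintro rfl; simp [zero_pow (by omega : s ≠ 0)] at hc
    refine ⟨ξ, ξ⁻¹ • A, by rw [pow_mul, hc],
      transpose_mul_self_eq_one_of_mul_transpose_eq_sq_smul hξ hAq,
      by rw [smul_smul, mul_inv_cancel₀ hξ, one_smul]⟩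
  · rintro ⟨ζ, B, hζ, hB, rfl⟩
    rw [(linearSubst_qpoly_eq_C_mul_iff _ (ζ ^ 2)).2
      (smul_mul_transpose_smul_of_transpose_mul_self_eq_one hB ζ),
      mul_pow, ← C_pow, ← pow_mul, hζ, C_1, one_mul]

open Matrix in
/-- For A ∈ GL_n(ℂ), the substitution action fixes q_n^s iff A = ζB with
ζ^{2s} = 1 and B complex orthogonal. -/
theorem stabilizer_of_power_of_quadric (n s : ℕ) (hn : 1 ≤ n) (hs : 1 ≤ s)
    (A : Matrix (Fin n) (Fin n) ℂ) (hA : IsUnit A.det) :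
    (MvPolynomial.bind₁ (fun j : Fin n => ∑ k : Fin n, C (A k j) * X k)) (qpoly n ^ s)
        = qpoly n ^ s ↔
      ∃ (ζ : ℂ) (B : Matrix (Fin n) (Fin n) ℂ),
        ζ ^ (2 * s) = 1 ∧ Bᵀ * B = 1 ∧ A = ζ • B :=
  stabilizer_of_power_of_quadric_general n s hn hs A
end

section
/- For every integer s ≥ 1, the Waring rank of the s-th power of the binary quadratic form q_2 = X_1^2 + X_2^2 equals s+1: rk(q_2^s) = s+1. -/
open MvPolynomial

noncomputable def waringRank (n d : ℕ) (f : MvPolynomial (Fin n) ℂ) : ℕ :=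
  sInf {r : ℕ | ∃ a : Fin r → Fin n → ℂ, f = ∑ k : Fin r, linForm (a k) ^ d}

/-!
Substituting `X₀ ↦ (X₀ + X₁) / 2`, `X₁ ↦ i (X₁ - X₀) / 2` turns `X₀² + X₁²` into `X₀ X₁`, and
`X₀ ↦ X₀ + i X₁`, `X₁ ↦ X₀ - i X₁` turns `X₀ X₁` into `X₀² + X₁²`. Linear substitutions map
sums of `r` powers of linear forms to such sums, so `q₂ˢ` and `X₀ˢ X₁ˢ` have the same Waring
rank. If `ζ` is a primitive `(s+1)`-th root of unity, `∑ₖ ζᵏ (ζᵏ X₀ + X₁)²ˢ` is a nonzero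
multiple of `X₀ˢ X₁ˢ`, giving `s + 1` powers. Conversely, the catalecticant of a `2s`-th power
of a linear form has rank one, so that of a sum of `r` such powers has rank at most `r`, while
the catalecticant of `X₀ˢ X₁ˢ` is an invertible antidiagonal matrix of size `s + 1`.
-/

open Finset Finsupp Complex

lemma linForm_smul {n : ℕ} (μ : ℂ) (a : Fin n → ℂ) : linForm (μ • a) = C μ * linForm a := by
  simp [linForm, Finset.mul_sum, mul_assoc]

lemma aeval_linForm {n m : ℕ} (M : Fin n → Fin m → ℂ) (a : Fin n → ℂ) :
    aeval (fun i => linForm (M i)) (linForm a) = linForm (Matrix.vecMul a M) := by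
  simp only [linForm, map_sum, map_mul, aeval_C, aeval_X, algebraMap_eq, Matrix.vecMul,
    dotProduct, Finset.mul_sum, Finset.sum_mul]
  rw [Finset.sum_comm]
  simp only [mul_assoc]

def HasWaringDecomposition (n d : ℕ) (f : MvPolynomial (Fin n) ℂ) (r : ℕ) : Prop :=
  ∃ a : Fin r → Fin n → ℂ, f = ∑ k : Fin r, linForm (a k) ^ d

lemma waringRank_eq_of_isLeast {n d r : ℕ} {f : MvPolynomial (Fin n) ℂ}
    (h : IsLeast {r | HasWaringDecomposition n d f r} r) : waringRank n d f = r :=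
  h.csInf_eq

namespace HasWaringDecomposition

variable {n d r : ℕ}

lemma aeval_linForm {m : ℕ} {f : MvPolynomial (Fin n) ℂ} (h : HasWaringDecomposition n d f r)
    (M : Fin n → Fin m → ℂ) :
    HasWaringDecomposition m d (aeval (fun i => linForm (M i)) f) r := by
  obtain ⟨a, rfl⟩ := h
  exact ⟨fun k => Matrix.vecMul (a k) M, by simp only [map_sum, map_pow, _root_.aeval_linForm]⟩

lemma sum_C_mul (hd : 0 < d) (c : Fin r → ℂ) (a : Fin r → Fin n → ℂ) :
    HasWaringDecomposition n d (∑ k, C (c k) * linForm (a k) ^ d) r := by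
  choose μ hμ using fun k => IsAlgClosed.exists_pow_nat_eq (c k) hd
  exact ⟨fun k => μ k • a k, by simp [linForm_smul, mul_pow, ← C_pow, hμ]⟩

end HasWaringDecomposition

lemma linForm_two (a : Fin 2 → ℂ) : linForm a = C (a 0) * X 0 + C (a 1) * X 1 := by
  simp [linForm, Fin.sum_univ_two]

lemma linForm_two_pow (a : Fin 2 → ℂ) (n : ℕ) :
    linForm a ^ n = ∑ j ∈ range (n + 1),
      C (n.choose j * a 0 ^ j * a 1 ^ (n - j)) * (X 0 ^ j * X 1 ^ (n - j)) := by
  rw [linForm_two, add_pow]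
  refine Finset.sum_congr rfl fun j _ => ?_
  simp only [mul_pow, ← C_pow, map_mul, map_natCast]
  ring

lemma X_pow_mul_X_pow (i j : ℕ) :
    (X 0 ^ i * X 1 ^ j : MvPolynomial (Fin 2) ℂ) = monomial (single 0 i + single 1 j) 1 := by
  rw [X_pow_eq_monomial, X_pow_eq_monomial, monomial_mul, mul_one]

lemma single_add_single_inj {i j k l : ℕ} :
    single (0 : Fin 2) i + single 1 j = single 0 k + single 1 l ↔ i = k ∧ j = l := by
  refine ⟨fun h => ⟨?_, ?_⟩, fun ⟨hi, hj⟩ => hi ▸ hj ▸ rfl⟩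
  · simpa using DFunLike.congr_fun h 0
  · simpa using DFunLike.congr_fun h 1

lemma coeff_X_pow_mul_X_pow (n i j : ℕ) :
    coeff (single 0 i + single 1 (n - i)) (X 0 ^ j * X 1 ^ (n - j) : MvPolynomial (Fin 2) ℂ) =
      if i = j then 1 else 0 := by
  rw [X_pow_mul_X_pow, coeff_monomial]
  exact if_congr (by rw [single_add_single_inj]; omega) rfl rfl

lemma coeff_linForm_two_pow (a : Fin 2 → ℂ) {n j : ℕ} (hj : j ≤ n) :
    coeff (single 0 j + single 1 (n - j)) (linForm a ^ n) =
      n.choose j * a 0 ^ j * a 1 ^ (n - j) := by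
  rw [linForm_two_pow, coeff_sum, Finset.sum_eq_single_of_mem j (by simp; omega)]
  · rw [coeff_C_mul, coeff_X_pow_mul_X_pow, if_pos rfl, mul_one]
  · intro k _ hkj
    rw [coeff_C_mul, coeff_X_pow_mul_X_pow, if_neg (Ne.symm hkj), mul_zero]

/-- The middle catalecticant of a binary form of degree `2 * s`: the Hankel matrix of its
coefficients, each divided by its binomial coefficient. -/
noncomputable def catalecticant (s : ℕ) (f : MvPolynomial (Fin 2) ℂ) :
    Matrix (Fin (s + 1)) (Fin (s + 1)) ℂ :=
  Matrix.of fun i j =>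
    coeff (single 0 (i + j : ℕ) + single 1 (2 * s - (i + j))) f / (2 * s).choose (i + j)

section catalecticant

variable {s : ℕ}

lemma catalecticant_sum {ι : Type*} (t : Finset ι) (f : ι → MvPolynomial (Fin 2) ℂ) :
    catalecticant s (∑ k ∈ t, f k) = ∑ k ∈ t, catalecticant s (f k) := by
  ext i j
  simp [catalecticant, coeff_sum, Finset.sum_div, Matrix.sum_apply]

lemma catalecticant_linForm_pow (a : Fin 2 → ℂ) :
    catalecticant s (linForm a ^ (2 * s)) =
      Matrix.vecMulVec (fun t : Fin (s + 1) => a 0 ^ (t : ℕ) * a 1 ^ (s - t))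
        (fun t : Fin (s + 1) => a 0 ^ (t : ℕ) * a 1 ^ (s - t)) := by
  ext i j
  have hij : (i + j : ℕ) ≤ 2 * s := by omega
  have hchoose : ((2 * s).choose (i + j) : ℂ) ≠ 0 := by exact_mod_cast (Nat.choose_pos hij).ne'
  rw [catalecticant, Matrix.of_apply, coeff_linForm_two_pow a hij, mul_assoc,
    mul_div_cancel_left₀ _ hchoose, Matrix.vecMulVec_apply,
    show 2 * s - (i + j) = (s - i) + (s - j) by omega, pow_add, pow_add]
  ring

lemma rank_catalecticant_le {r : ℕ} {f : MvPolynomial (Fin 2) ℂ}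
    (h : HasWaringDecomposition 2 (2 * s) f r) : (catalecticant s f).rank ≤ r := by
  obtain ⟨a, rfl⟩ := h
  set V : Matrix (Fin r) (Fin (s + 1)) ℂ :=
    Matrix.of fun k t => a k 0 ^ (t : ℕ) * a k 1 ^ (s - t)
  have hVV : catalecticant s (∑ k, linForm (a k) ^ (2 * s)) = V.transpose * V := by
    ext i j
    simp [catalecticant_sum, catalecticant_linForm_pow, V, Matrix.mul_apply, Matrix.sum_apply,
      Matrix.vecMulVec_apply]
  rw [hVV]
  exact (Matrix.rank_mul_le_right _ _).trans V.rank_le_height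

lemma catalecticant_X_pow_mul_X_pow :
    catalecticant s (X 0 ^ s * X 1 ^ s) =
      ((2 * s).choose s : ℂ)⁻¹ • Fin.revPerm.permMatrix ℂ := by
  ext i j
  have hrev : Fin.revPerm i = j ↔ (i + j : ℕ) = s := by
    rw [Fin.revPerm_apply, Fin.ext_iff, Fin.val_rev]; omega
  have := coeff_X_pow_mul_X_pow (2 * s) (i + j) s
  rw [show 2 * s - s = s by omega] at this
  rw [catalecticant, Matrix.of_apply, this, Matrix.smul_apply, Equiv.Perm.permMatrix,
    PEquiv.toMatrix_apply, Equiv.toPEquiv_apply]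
  simp only [Option.mem_def, Option.some_inj, hrev]
  split_ifs with h
  · rw [h, one_div, smul_eq_mul, mul_one]
  · rw [zero_div, smul_zero]

lemma rank_catalecticant_X_pow_mul_X_pow :
    (catalecticant s (X 0 ^ s * X 1 ^ s)).rank = s + 1 := by
  rw [catalecticant_X_pow_mul_X_pow, Matrix.rank_of_isUnit, Fintype.card_fin]
  rw [Matrix.isUnit_iff_isUnit_det, Matrix.det_smul, Matrix.det_permutation, isUnit_iff_ne_zero]
  have : ((2 * s).choose s : ℂ) ≠ 0 := by exact_mod_cast (Nat.choose_pos (by omega)).ne'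
  simp [this]

end catalecticant

lemma IsPrimitiveRoot.geom_sum_pow_eq_zero {ζ : ℂ} {n j : ℕ} (hζ : IsPrimitiveRoot ζ n)
    (hj : ¬ n ∣ j) : ∑ k ∈ range n, (ζ ^ j) ^ k = 0 := by
  have hne : ζ ^ j ≠ 1 := fun h => hj ((hζ.pow_eq_one_iff_dvd j).mp h)
  refine eq_zero_of_ne_zero_of_mul_left_eq_zero (sub_ne_zero.mpr hne.symm) ?_
  rw [mul_neg_geom_sum, ← pow_mul, mul_comm, pow_mul, hζ.pow_eq_one, one_pow, sub_self]

/-- Only the middle coefficient survives: `∑ k, ζ ^ (k * (j + 1))` vanishes unless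
`s + 1 ∣ j + 1`, i.e. `j = s`. -/
lemma IsPrimitiveRoot.sum_pow_mul_linForm_pow {s : ℕ} {ζ : ℂ} (hζ : IsPrimitiveRoot ζ (s + 1)) :
    ∑ k : Fin (s + 1), C (ζ ^ (k : ℕ)) * linForm ![ζ ^ (k : ℕ), 1] ^ (2 * s) =
      C (((s + 1) * (2 * s).choose s : ℕ) : ℂ) * X 0 ^ s * X 1 ^ s := by
  have hmoment : ∀ j ∈ range (2 * s + 1),
      ∑ k : Fin (s + 1), (C (ζ ^ (k : ℕ) * (2 * s).choose j * (ζ ^ (k : ℕ)) ^ j) *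
        X 0 ^ j * X 1 ^ (2 * s - j) : MvPolynomial (Fin 2) ℂ) =
      if j = s then C (((s + 1) * (2 * s).choose s : ℕ) : ℂ) * X 0 ^ s * X 1 ^ s else 0 := by
    intro j hj
    rw [← Finset.sum_mul, ← Finset.sum_mul, ← map_sum]
    have hsum : ∑ k : Fin (s + 1), ζ ^ (k : ℕ) * (2 * s).choose j * (ζ ^ (k : ℕ)) ^ j =
        (2 * s).choose j * ∑ k ∈ range (s + 1), (ζ ^ (j + 1)) ^ k := by
      rw [Finset.mul_sum,
        Fin.sum_univ_eq_sum_range (fun k => ζ ^ k * (2 * s).choose j * (ζ ^ k) ^ j)]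
      exact Finset.sum_congr rfl fun k _ => by ring
    rw [hsum]
    split_ifs with hjs
    · subst hjs
      rw [hζ.pow_eq_one, show 2 * j - j = j by omega]
      simp [mul_comm]
    · have hdvd : ¬ (s + 1) ∣ (j + 1) := fun ⟨c, hc⟩ => by
        rw [mem_range] at hj
        rcases c with _ | _ | c <;> [omega; exact hjs (by omega); nlinarith]
      rw [hζ.geom_sum_pow_eq_zero hdvd, mul_zero, map_zero, zero_mul, zero_mul]
  simp only [linForm_two_pow, Matrix.cons_val_zero, Matrix.cons_val_one, one_pow, mul_one,
    Finset.mul_sum, ← mul_assoc, ← map_mul]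
  rw [Finset.sum_comm, Finset.sum_congr rfl hmoment, Finset.sum_ite_eq', if_pos (by simp; omega)]

lemma hasWaringDecomposition_X_pow_mul_X_pow {s : ℕ} (hs : 0 < s) :
    HasWaringDecomposition 2 (2 * s) (X 0 ^ s * X 1 ^ s) (s + 1) := by
  obtain ⟨ζ, hζ⟩ : ∃ ζ : ℂ, IsPrimitiveRoot ζ (s + 1) :=
    ⟨_, isPrimitiveRoot_exp (s + 1) s.succ_ne_zero⟩
  have hN : (((s + 1) * (2 * s).choose s : ℕ) : ℂ) ≠ 0 := by
    rw [Nat.cast_ne_zero]; exact Nat.mul_ne_zero s.succ_ne_zero (Nat.choose_pos (by omega)).ne'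
  convert HasWaringDecomposition.sum_C_mul (d := 2 * s) (by omega)
    (fun k : Fin (s + 1) => (((s + 1) * (2 * s).choose s : ℕ) : ℂ)⁻¹ * ζ ^ (k : ℕ))
    (fun k => ![ζ ^ (k : ℕ), 1]) using 1
  simp only [map_mul, mul_assoc, ← Finset.mul_sum, hζ.sum_pow_mul_linForm_pow]
  rw [← mul_assoc, ← map_mul, inv_mul_cancel₀ hN, map_one, one_mul]

lemma succ_le_of_hasWaringDecomposition_X_pow_mul_X_pow {s r : ℕ}
    (h : HasWaringDecomposition 2 (2 * s) (X 0 ^ s * X 1 ^ s) r) : s + 1 ≤ r :=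
  rank_catalecticant_X_pow_mul_X_pow ▸ rank_catalecticant_le h

lemma C_I_sq : (C I : MvPolynomial (Fin 2) ℂ) ^ 2 = -1 := by
  rw [← map_pow, I_sq, map_neg, map_one]

lemma aeval_X_mul_X :
    aeval (fun i => linForm (![![1, I], ![1, -I]] i)) (X 0 * X 1 : MvPolynomial (Fin 2) ℂ) =
      qpoly 2 := by
  simp only [map_mul, aeval_X, linForm_two, qpoly, Fin.sum_univ_two, Matrix.cons_val_zero,
    Matrix.cons_val_one, map_neg, map_one]
  linear_combination (-X 1 ^ 2 : MvPolynomial (Fin 2) ℂ) * C_I_sq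

lemma aeval_qpoly_two :
    aeval (fun i => linForm (![![1 / 2, 1 / 2], ![-I / 2, I / 2]] i)) (qpoly 2) = X 0 * X 1 := by
  have hhalf : (2 : MvPolynomial (Fin 2) ℂ) * C (1 / 2) = 1 := by
    rw [← map_ofNat C 2, ← map_mul]; norm_num
  have hI : ∀ c : ℂ, (C (c * I / 2) : MvPolynomial (Fin 2) ℂ) = C c * C I * C (1 / 2) := by
    intro c; rw [← map_mul, ← map_mul]; ring_nf
  simp only [qpoly, Fin.sum_univ_two, map_add, map_pow, aeval_X, linForm_two,
    Matrix.cons_val_zero, Matrix.cons_val_one]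
  rw [show -I / 2 = -1 * I / 2 by ring, show I / 2 = 1 * I / 2 by ring, hI, hI, map_neg, map_one]
  linear_combination (C (1 / 2) ^ 2 * (X 1 - X 0) ^ 2 : MvPolynomial (Fin 2) ℂ) * C_I_sq +
    ((2 * C (1 / 2) + 1) * X 0 * X 1 : MvPolynomial (Fin 2) ℂ) * hhalf

/-- For every s ≥ 1, the Waring rank of q_2^s equals s + 1. -/
theorem waringRank_power_of_binary_quadric (s : ℕ) (hs : 1 ≤ s) :
    waringRank 2 (2 * s) (qpoly 2 ^ s) = s + 1 := by
  refine waringRank_eq_of_isLeast ⟨?_, fun r h => ?_⟩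
  · have := (hasWaringDecomposition_X_pow_mul_X_pow hs).aeval_linForm ![![1, I], ![1, -I]]
    rwa [← mul_pow, map_pow, aeval_X_mul_X] at this
  · apply succ_le_of_hasWaringDecomposition_X_pow_mul_X_pow
    have := h.aeval_linForm ![![1 / 2, 1 / 2], ![-I / 2, I / 2]]
    rwa [map_pow, aeval_qpoly_two, mul_pow] at this
end

section
/- Let a_1, a_2, a_3, a_4 ∈ ℂ³ be four pairwise distinct unitary points (a_j·a_j = 1), and suppose there is a value a ∈ ℂ such that (a_j·a_k)^2 = a^2 for all 1 ≤ j < k ≤ 4. Then a^2 ∈ {1/9, 1/5, 1}. -/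
open MvPolynomial

/-!
Four vectors of `ℂ³` are linearly dependent, so their Gram matrix `G = P Pᵀ` (for the bilinear
form `·`) is singular. Here `G` has unit diagonal and off-diagonal entries `±a`. Expanding
`det G` and running through the sign patterns, the determinant is `(1 + 3a)(1 - a)³`,
`(1 - a²)(1 - 5a²)` or `(1 - 3a)(1 + a)³`, according as zero, two or four of the triangles of the
sign graph on `K₄` are negative; its vanishing forces `a² ∈ {1/9, 1/5, 1}`.
-/

open Matrix

theorem Matrix.det_mul_eq_zero_of_card_lt {K m n : Type*} [Field K] [Fintype m] [Fintype n]
    [DecidableEq m] (A : Matrix m n K) (B : Matrix n m K)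
    (h : Fintype.card n < Fintype.card m) : (A * B).det = 0 := by
  by_contra hdet
  have hfull := rank_of_isUnit _ ((isUnit_iff_isUnit_det _).mpr (isUnit_iff_ne_zero.mpr hdet))
  have hle := (rank_mul_le_left A B).trans A.rank_le_card_width
  omega

section Gram

variable {ι : Type*} {n : ℕ}

noncomputable def dotGram (p : ι → Fin n → ℂ) : Matrix ι ι ℂ :=
  of fun j k => dotC (p j) (p k)

theorem dotGram_eq_mul_transpose (p : ι → Fin n → ℂ) : dotGram p = of p * (of p)ᵀ := by
  ext j k
  simp [dotGram, dotC, mul_apply]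

theorem dotGram_isSymm (p : ι → Fin n → ℂ) : (dotGram p).IsSymm := by
  rw [dotGram_eq_mul_transpose, IsSymm, transpose_mul, transpose_transpose]

theorem det_dotGram_eq_zero [Fintype ι] [DecidableEq ι] (p : ι → Fin n → ℂ)
    (h : n < Fintype.card ι) : (dotGram p).det = 0 := by
  rw [dotGram_eq_mul_transpose]
  exact det_mul_eq_zero_of_card_lt _ _ (by simpa using h)

end Gram

theorem Matrix.IsSymm.eq_fin_four {R : Type*} {M : Matrix (Fin 4) (Fin 4) R} (hM : M.IsSymm) :
    M = !![M 0 0, M 0 1, M 0 2, M 0 3; M 0 1, M 1 1, M 1 2, M 1 3;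
      M 0 2, M 1 2, M 2 2, M 2 3; M 0 3, M 1 3, M 2 3, M 3 3] := by
  ext j k
  fin_cases j <;> fin_cases k <;> first | rfl | exact hM.apply _ _

section UnitDiagonal

variable {R : Type*} [CommRing R]

theorem det_fin_four_unit_diag (x₀₁ x₀₂ x₀₃ x₁₂ x₁₃ x₂₃ : R) :
    det !![1, x₀₁, x₀₂, x₀₃; x₀₁, 1, x₁₂, x₁₃; x₀₂, x₁₂, 1, x₂₃; x₀₃, x₁₃, x₂₃, 1] =
      1 - (x₀₁ ^ 2 + x₀₂ ^ 2 + x₀₃ ^ 2 + x₁₂ ^ 2 + x₁₃ ^ 2 + x₂₃ ^ 2)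
        + 2 * (x₀₁ * x₀₂ * x₁₂ + x₀₁ * x₀₃ * x₁₃ + x₀₂ * x₀₃ * x₂₃ + x₁₂ * x₁₃ * x₂₃)
        + (x₀₁ ^ 2 * x₂₃ ^ 2 + x₀₂ ^ 2 * x₁₃ ^ 2 + x₀₃ ^ 2 * x₁₂ ^ 2)
        - 2 * (x₀₁ * x₀₂ * x₁₃ * x₂₃ + x₀₁ * x₀₃ * x₁₂ * x₂₃ + x₀₂ * x₀₃ * x₁₂ * x₁₃) := by
  simp [det_succ_row_zero, Fin.sum_univ_succ, Fin.succAbove]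
  ring

theorem det_fin_four_unit_diag_of_eq_or_eq_neg {a x₀₁ x₀₂ x₀₃ x₁₂ x₁₃ x₂₃ : R}
    (h₀₁ : x₀₁ = a ∨ x₀₁ = -a) (h₀₂ : x₀₂ = a ∨ x₀₂ = -a) (h₀₃ : x₀₃ = a ∨ x₀₃ = -a)
    (h₁₂ : x₁₂ = a ∨ x₁₂ = -a) (h₁₃ : x₁₃ = a ∨ x₁₃ = -a) (h₂₃ : x₂₃ = a ∨ x₂₃ = -a) :
    let d := det !![1, x₀₁, x₀₂, x₀₃; x₀₁, 1, x₁₂, x₁₃; x₀₂, x₁₂, 1, x₂₃; x₀₃, x₁₃, x₂₃, 1]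
    d = (1 + 3 * a) * (1 - a) ^ 3 ∨ d = (1 - a ^ 2) * (1 - 5 * a ^ 2) ∨
      d = (1 - 3 * a) * (1 + a) ^ 3 := by
  rw [det_fin_four_unit_diag]
  rcases h₀₁ with rfl | rfl <;> rcases h₀₂ with rfl | rfl <;> rcases h₀₃ with rfl | rfl <;>
    rcases h₁₂ with rfl | rfl <;> rcases h₁₃ with rfl | rfl <;> rcases h₂₃ with rfl | rfl <;>
    first
      | exact Or.inl (by ring1)
      | exact Or.inr (Or.inl (by ring1))
      | exact Or.inr (Or.inr (by ring1))

end UnitDiagonal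

theorem sq_eq_of_equiangular_det_eq_zero {K : Type*} [Field K] [CharZero K] {a : K}
    (h : (1 + 3 * a) * (1 - a) ^ 3 = 0 ∨ (1 - a ^ 2) * (1 - 5 * a ^ 2) = 0 ∨
      (1 - 3 * a) * (1 + a) ^ 3 = 0) :
    a ^ 2 = 1 / 9 ∨ a ^ 2 = 1 / 5 ∨ a ^ 2 = 1 := by
  rcases h with h | h | h <;> simp only [mul_eq_zero, pow_eq_zero_iff three_ne_zero] at h
  · rcases h with h | h
    · left; linear_combination (1 / 9 * (3 * a - 1)) * h
    · right; right; linear_combination (-(a + 1)) * h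
  · rcases h with h | h
    · right; right; linear_combination -h
    · right; left; linear_combination (-1 / 5) * h
  · rcases h with h | h
    · left; linear_combination (-1 / 9 * (3 * a + 1)) * h
    · right; right; linear_combination (a - 1) * h

theorem gram_equiangular_values_general (p : Fin 4 → Fin 3 → ℂ)
    (hunit : ∀ j, dotC (p j) (p j) = 1) (a : ℂ)
    (hang : ∀ j k : Fin 4, j < k → (dotC (p j) (p k)) ^ 2 = a ^ 2) :
    a ^ 2 = 1 / 9 ∨ a ^ 2 = 1 / 5 ∨ a ^ 2 = 1 := by
  have hsign (j k : Fin 4) (hjk : j < k) : dotGram p j k = a ∨ dotGram p j k = -a :=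
    sq_eq_sq_iff_eq_or_eq_neg.mp (hang j k hjk)
  have hdiag (j : Fin 4) : dotGram p j j = 1 := hunit j
  have hdet := det_dotGram_eq_zero p (by decide)
  rw [(dotGram_isSymm p).eq_fin_four, hdiag 0, hdiag 1, hdiag 2, hdiag 3] at hdet
  apply sq_eq_of_equiangular_det_eq_zero
  simpa only [hdet, @eq_comm ℂ 0] using
    det_fin_four_unit_diag_of_eq_or_eq_neg (hsign 0 1 (by decide)) (hsign 0 2 (by decide))
      (hsign 0 3 (by decide)) (hsign 1 2 (by decide)) (hsign 1 3 (by decide))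
      (hsign 2 3 (by decide))

/-- If a₁,…,a₄ ∈ ℂ³ are pairwise distinct unitary points and
(a_j·a_k)² = a² for all j < k, then a² ∈ {1/9, 1/5, 1}. -/
theorem gram_equiangular_values (p : Fin 4 → Fin 3 → ℂ) (hdist : Function.Injective p)
    (hunit : ∀ j, dotC (p j) (p j) = 1) (a : ℂ)
    (hang : ∀ j k : Fin 4, j < k → (dotC (p j) (p k)) ^ 2 = a ^ 2) :
    a ^ 2 = 1 / 9 ∨ a ^ 2 = 1 / 5 ∨ a ^ 2 = 1 :=
  gram_equiangular_values_general p hunit a hang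
end
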